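/- arXiv:2403.06920 — 4 statements merged into one kernel-verified Lean document; each statement's English description precedes it below -/
import Mathlib

section
/- Let (u(k))_{k≥0}, (b(k))_{k≥0}, (q(k))_{k≥0} be real sequences such that 0 < b(k) ≤ 1 and q(k) > 0 for all k, ∑_{k=0}^∞ b(k) = ∞, lim_{k→∞} q(k)/b(k) = 0, and u(k+1) ≤ (1 − b(k))u(k) + q(k) for all k ≥ 0. Then limsup_{k→∞} u(k) ≤ 0. In particular, if u(k) ≥ 0 for all k ≥ 0, then lim_{k→∞} u(k) = 0. -/
/-!
Fix `ε > 0`. Eventually `q k ≤ (ε / 2) b k`, and from then on the excess `w k = max (u k - ε / 2) 0`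
contracts: `w (k + 1) ≤ (1 - b k) w k ≤ exp (-b k) w k`. Hence `w k` is at most a constant times
`exp (-∑_{j<k} b j)`, which tends to `0` because `∑ b` diverges, so eventually `u k < ε`.
-/

open Filter Finset Real Topology

lemma le_mul_exp_neg_sum_of_le_one_sub_mul {w b : ℕ → ℝ} {N : ℕ} (hw : ∀ k, 0 ≤ w k)
    (hrec : ∀ k ≥ N, w (k + 1) ≤ (1 - b k) * w k) :
    ∀ n ≥ N, w n ≤ w N * exp (∑ k ∈ range N, b k) * exp (-∑ k ∈ range n, b k) := by
  intro n hn
  induction n, hn using Nat.le_induction with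
  | base => rw [mul_assoc, ← exp_add, add_neg_cancel, exp_zero, mul_one]
  | succ n hn ih =>
    calc w (n + 1) ≤ (1 - b n) * w n := hrec n hn
      _ ≤ exp (-b n) * w n := by
        gcongr
        · exact hw n
        · linarith [add_one_le_exp (-b n)]
      _ ≤ exp (-b n) * (w N * exp (∑ k ∈ range N, b k) * exp (-∑ k ∈ range n, b k)) := by
        gcongr
      _ = w N * exp (∑ k ∈ range N, b k) * exp (-∑ k ∈ range (n + 1), b k) := by
        rw [sum_range_succ, neg_add, exp_add]
        ring

theorem tendsto_zero_of_le_one_sub_mul {w b : ℕ → ℝ} {N : ℕ} (hw : ∀ k, 0 ≤ w k)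
    (hrec : ∀ k ≥ N, w (k + 1) ≤ (1 - b k) * w k)
    (hb_div : Tendsto (fun n => ∑ k ∈ range n, b k) atTop atTop) :
    Tendsto w atTop (𝓝 0) := by
  have hexp : Tendsto (fun n => exp (-∑ k ∈ range n, b k)) atTop (𝓝 0) :=
    tendsto_exp_atBot.comp (tendsto_neg_atTop_atBot.comp hb_div)
  refine squeeze_zero' (Eventually.of_forall hw)
    (eventually_atTop.2 ⟨N, le_mul_exp_neg_sum_of_le_one_sub_mul hw hrec⟩) ?_
  simpa using hexp.const_mul (w N * exp (∑ k ∈ range N, b k))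

theorem eventually_lt_of_le_one_sub_mul_add {u b q : ℕ → ℝ}
    (hb_pos : ∀ k, 0 < b k) (hb_le : ∀ k, b k ≤ 1)
    (hb_div : Tendsto (fun n => ∑ k ∈ range n, b k) atTop atTop)
    (hqb : Tendsto (fun k => q k / b k) atTop (𝓝 0))
    (hrec : ∀ k, u (k + 1) ≤ (1 - b k) * u k + q k) {ε : ℝ} (hε : 0 < ε) :
    ∀ᶠ k in atTop, u k < ε := by
  have hq : ∀ᶠ k in atTop, q k ≤ ε / 2 * b k :=
    (hqb.eventually (ge_mem_nhds (half_pos hε))).mono fun k hk =>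
      (div_le_iff₀ (hb_pos k)).1 hk
  obtain ⟨N, hN⟩ := eventually_atTop.1 hq
  set w : ℕ → ℝ := fun k => max (u k - ε / 2) 0
  have hw_step : ∀ k ≥ N, w (k + 1) ≤ (1 - b k) * w k := by
    intro k hk
    have hb : 0 ≤ 1 - b k := sub_nonneg.2 (hb_le k)
    refine max_le ?_ (mul_nonneg hb (le_max_right _ _))
    calc u (k + 1) - ε / 2 ≤ (1 - b k) * u k + ε / 2 * b k - ε / 2 := by
          linarith [hrec k, hN k hk]
      _ = (1 - b k) * (u k - ε / 2) := by ring
      _ ≤ (1 - b k) * w k := mul_le_mul_of_nonneg_left (le_max_left _ _) hb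
  have hw : Tendsto w atTop (𝓝 0) :=
    tendsto_zero_of_le_one_sub_mul (fun k => le_max_right _ _) hw_step hb_div
  filter_upwards [hw.eventually (gt_mem_nhds (half_pos hε))] with k hk
  linarith [le_max_left (u k - ε / 2) 0]

lemma limsup_nonpos_of_forall_eventually_lt {α : Type*} {f : Filter α} {u : α → ℝ}
    (h : ∀ ε > 0, ∀ᶠ x in f, u x < ε) : limsup u f ≤ 0 := by
  by_cases hu : f.IsCoboundedUnder (· ≤ ·) u
  · exact (limsup_le_iff hu (isBoundedUnder_of_eventually_le ((h 1 one_pos).mono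
      fun _ hx => hx.le))).2 h
  · rw [Real.limsup_of_not_isCoboundedUnder hu]

theorem sequence_convergence_lemma_general (u b q : ℕ → ℝ)
    (hb_pos : ∀ k, 0 < b k) (hb_le : ∀ k, b k ≤ 1)
    (hb_div : Tendsto (fun n => ∑ k ∈ Finset.range n, b k) atTop atTop)
    (hqb : Tendsto (fun k => q k / b k) atTop (nhds 0))
    (hrec : ∀ k, u (k + 1) ≤ (1 - b k) * u k + q k) :
    limsup u atTop ≤ 0 ∧ ((∀ k, 0 ≤ u k) → Tendsto u atTop (nhds 0)) := by
  have hlt : ∀ ε > 0, ∀ᶠ k in atTop, u k < ε := fun _ hε =>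
    eventually_lt_of_le_one_sub_mul_add hb_pos hb_le hb_div hqb hrec hε
  refine ⟨limsup_nonpos_of_forall_eventually_lt hlt, fun hu => ?_⟩
  exact tendsto_order.2 ⟨fun a ha => Eventually.of_forall fun k => ha.trans_le (hu k), hlt⟩

/-- Lemma 3 (Polyak): a real sequence satisfying the recursive inequality
`u (k+1) ≤ (1 - b k) * u k + q k` with `0 < b k ≤ 1`, `q k > 0`, divergent `∑ b k`
and `q k / b k → 0` has `limsup u ≤ 0`; if moreover `u k ≥ 0` for all `k`,
then `u → 0`. -/
theorem sequence_convergence_lemma (u b q : ℕ → ℝ)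
    (hb_pos : ∀ k, 0 < b k) (hb_le : ∀ k, b k ≤ 1) (hq_pos : ∀ k, 0 < q k)
    (hb_div : Tendsto (fun n => ∑ k ∈ Finset.range n, b k) atTop atTop)
    (hqb : Tendsto (fun k => q k / b k) atTop (nhds 0))
    (hrec : ∀ k, u (k + 1) ≤ (1 - b k) * u k + q k) :
    limsup u atTop ≤ 0 ∧ ((∀ k, 0 ≤ u k) → Tendsto u atTop (nhds 0)) :=
  sequence_convergence_lemma_general u b q hb_pos hb_le hb_div hqb hrec
end

section
/- Under the stated setting, for every k ≥ 0, E[V(k+1)] ≤ (1 − 2α(k)λ + α(k)²‖L̄‖²) E[V(k)] + α(k)² ‖I_N − J‖² M, where ‖·‖ applied to matrices denotes the spectral norm. -/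
/-
Because `L̄` is symmetric with `L̄𝟙 = 0`, the averaging matrix `J` commutes with `L̄`, so the
disagreement `y(k) = (I - J) x(k)` follows `y(k+1) = (I - α L̄) y(k) + α (I - J) w(k)`.
The noise is `L²`-orthogonal to every square-integrable `ℱ_k`-measurable vector, so
`E‖y(k+1)‖²` splits into `E‖(I - α L̄) y(k)‖²`, which the spectral gap controls since `y(k)` has
zero mean, and `α² E‖(I - J) w(k)‖² ≤ α² ‖I - J‖² M`.
-/

open MeasureTheory Filter Matrix

/-- The spectral (operator 2-)norm of a real square matrix. -/
noncomputable def specNorm {N : ℕ} (M : Matrix (Fin N) (Fin N) ℝ) : ℝ :=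
  ‖Matrix.toEuclideanCLM (𝕜 := ℝ) M‖

section

variable {n : Type*} [Fintype n]

lemma sum_sq_add_smul (u z : n → ℝ) (c : ℝ) :
    ∑ i, ((u + c • z) i) ^ 2 = ∑ i, u i ^ 2 + 2 * c * (u ⬝ᵥ z) + c ^ 2 * ∑ i, z i ^ 2 := by
  simp only [Pi.add_apply, Pi.smul_apply, smul_eq_mul, dotProduct, Finset.mul_sum,
    ← Finset.sum_add_distrib]
  exact Finset.sum_congr rfl fun i _ => by ring

lemma Matrix.IsSymm.commute_of_const {R : Type*} [CommSemiring R] {L : Matrix n n R}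
    (hL : L.IsSymm) (hL1 : L *ᵥ (fun _ => 1) = 0) (c : R) : Commute (of fun _ _ => c) L := by
  have hrow : ∀ i, ∑ j, L i j = 0 := fun i => by simpa [mulVec, dotProduct] using congrFun hL1 i
  have hcol : ∀ j, ∑ i, L i j = 0 := fun j => by simpa [← hL.apply j] using hrow j
  ext i j
  simp [mul_apply, ← Finset.mul_sum, ← Finset.sum_mul, hrow, hcol]

end

lemma sum_sq_mulVec_le_specNorm_sq {N : ℕ} (B : Matrix (Fin N) (Fin N) ℝ) (v : Fin N → ℝ) :
    ∑ i, (B *ᵥ v) i ^ 2 ≤ specNorm B ^ 2 * ∑ i, v i ^ 2 := by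
  have h := (toEuclideanCLM (𝕜 := ℝ) B).le_opNorm (WithLp.toLp 2 v)
  rw [toEuclideanCLM_toLp] at h
  have h2 := pow_le_pow_left₀ (norm_nonneg _) h 2
  simpa [mul_pow, EuclideanSpace.norm_sq_eq, specNorm] using h2

lemma sum_sq_one_sub_smul_mulVec_le {N : ℕ} (L : Matrix (Fin N) (Fin N) ℝ) {lam a : ℝ}
    (ha : 0 ≤ a) {u : Fin N → ℝ} (hu : lam * ∑ i, u i ^ 2 ≤ u ⬝ᵥ L *ᵥ u) :
    ∑ i, (((1 : Matrix (Fin N) (Fin N) ℝ) - a • L) *ᵥ u) i ^ 2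
      ≤ (1 - 2 * a * lam + a ^ 2 * specNorm L ^ 2) * ∑ i, u i ^ 2 := by
  have hsplit : ((1 : Matrix (Fin N) (Fin N) ℝ) - a • L) *ᵥ u = u + (-a) • (L *ᵥ u) := by
    rw [sub_mulVec, one_mulVec, smul_mulVec, neg_smul, sub_eq_add_neg]
  rw [hsplit, sum_sq_add_smul]
  have := mul_le_mul_of_nonneg_left hu (by positivity : 0 ≤ 2 * a)
  have := mul_le_mul_of_nonneg_left (sum_sq_mulVec_le_specNorm_sq L u) (sq_nonneg a)
  linarith

lemma sum_one_sub_averaging_mulVec_eq_zero {N : ℕ} (v : Fin N → ℝ) :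
    ∑ i, (((1 : Matrix (Fin N) (Fin N) ℝ) - of fun _ _ => (1 : ℝ) / N) *ᵥ v) i = 0 := by
  rcases Nat.eq_zero_or_pos N with rfl | hN
  · simp
  rw [sub_mulVec, one_mulVec]
  simp only [Pi.sub_apply, Finset.sum_sub_distrib, mulVec, dotProduct, of_apply,
    ← Finset.mul_sum, Finset.sum_const, Finset.card_univ, Fintype.card_fin, nsmul_eq_mul]
  field_simp
  ring

section Probability

variable {Ω ι κ : Type*} [Fintype ι] [Fintype κ] {m mΩ : MeasurableSpace Ω} {μ : Measure Ω}

lemma MeasureTheory.MemLp.mulVec {p : ENNReal} {f : Ω → κ → ℝ} (hf : MemLp f p μ)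
    (B : Matrix ι κ ℝ) : MemLp (fun ω => B *ᵥ f ω) p μ :=
  (LinearMap.toContinuousLinearMap (mulVecLin B)).comp_memLp' hf

lemma integrable_sum_sq {f : Ω → ι → ℝ} (hf : MemLp f 2 μ) :
    Integrable (fun ω => ∑ i, f ω i ^ 2) μ :=
  integrable_finsetSum _ fun i _ => (hf.eval i).integrable_sq

lemma integrable_dotProduct {f g : Ω → ι → ℝ} (hf : MemLp f 2 μ) (hg : MemLp g 2 μ) :
    Integrable (fun ω => f ω ⬝ᵥ g ω) μ :=
  integrable_finsetSum _ fun i _ => (hf.eval i).integrable_mul (hg.eval i)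

lemma integral_sum_sq_add_smul {Y Z : Ω → ι → ℝ} (hY : MemLp Y 2 μ) (hZ : MemLp Z 2 μ) (c : ℝ) :
    ∫ ω, ∑ i, ((Y ω + c • Z ω) i) ^ 2 ∂μ
      = ∫ ω, ∑ i, Y ω i ^ 2 ∂μ + 2 * c * ∫ ω, Y ω ⬝ᵥ Z ω ∂μ + c ^ 2 * ∫ ω, ∑ i, Z ω i ^ 2 ∂μ := by
  have hYY := integrable_sum_sq hY
  have hYZ := (integrable_dotProduct hY hZ).const_mul (2 * c)
  have hZZ := (integrable_sum_sq hZ).const_mul (c ^ 2)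
  simp_rw [sum_sq_add_smul]
  rw [integral_add _ hZZ, integral_add hYY hYZ, integral_const_mul, integral_const_mul]
  exact hYY.add hYZ

lemma integral_mul_eq_zero_of_condExp_eq_zero [IsFiniteMeasure μ] (hm : m ≤ mΩ) {f g : Ω → ℝ}
    (hf : StronglyMeasurable[m] f) (hfg : Integrable (f * g) μ) (hg : Integrable g μ)
    (hg0 : μ[g | m] =ᵐ[μ] 0) : ∫ ω, f ω * g ω ∂μ = 0 := by
  rw [← integral_condExp hm]
  refine integral_eq_zero_of_ae ((condExp_mul_of_stronglyMeasurable_left hf hfg hg).trans ?_)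
  filter_upwards [hg0] with ω hω
  simp [hω]

lemma integral_dotProduct_eq_zero_of_condExp_eq_zero [IsFiniteMeasure μ] (hm : m ≤ mΩ)
    {Y Z : Ω → ι → ℝ} (hY : Measurable[m] Y) (hY2 : MemLp Y 2 μ) (hZ2 : MemLp Z 2 μ)
    (hZ : ∀ i, μ[fun ω => Z ω i | m] =ᵐ[μ] 0) : ∫ ω, Y ω ⬝ᵥ Z ω ∂μ = 0 := by
  simp only [dotProduct]
  have hYZ : ∀ i, Integrable (fun ω => Y ω i * Z ω i) μ :=
    fun i => (hY2.eval i).integrable_mul (hZ2.eval i)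
  rw [integral_finsetSum _ fun i _ => hYZ i]
  have hYi : ∀ i, StronglyMeasurable[m] (fun ω => Y ω i) := fun i => by fun_prop
  exact Finset.sum_eq_zero fun i _ => integral_mul_eq_zero_of_condExp_eq_zero hm
    (hYi i) (hYZ i) ((hZ2.eval i).integrable one_le_two) (hZ i)

lemma integral_sum_sq_mulVec_add_smul_mulVec [IsFiniteMeasure μ] (hm : m ≤ mΩ)
    {Y Z : Ω → ι → ℝ} (hY : Measurable[m] Y) (hY2 : MemLp Y 2 μ) (hZ2 : MemLp Z 2 μ)
    (hZ : ∀ i, μ[fun ω => Z ω i | m] =ᵐ[μ] 0) (A B : Matrix ι ι ℝ) (c : ℝ) :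
    ∫ ω, ∑ i, ((A *ᵥ Y ω + c • B *ᵥ Z ω) i) ^ 2 ∂μ
      = ∫ ω, ∑ i, (A *ᵥ Y ω) i ^ 2 ∂μ + c ^ 2 * ∫ ω, ∑ i, (B *ᵥ Z ω) i ^ 2 ∂μ := by
  have hcross : ∫ ω, (A *ᵥ Y ω) ⬝ᵥ (B *ᵥ Z ω) ∂μ = 0 := by
    -- `(A Y) ⬝ (B Z) = (Bᵀ A Y) ⬝ Z`, and `Bᵀ A Y` is still `m`-measurable
    simp_rw [dotProduct_mulVec, ← mulVec_transpose]
    exact integral_dotProduct_eq_zero_of_condExp_eq_zero hm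
      ((by fun_prop : Continuous fun v => Bᵀ *ᵥ (A *ᵥ v)).measurable.comp hY)
      ((hY2.mulVec A).mulVec Bᵀ) hZ2 hZ
  rw [integral_sum_sq_add_smul (hY2.mulVec A) (hZ2.mulVec B), hcross, mul_zero, add_zero]

lemma integral_le_mul_integral {f g : Ω → ℝ} (hf : Integrable f μ) (hg : Integrable g μ) {c : ℝ}
    (hfg : ∀ ω, f ω ≤ c * g ω) : ∫ ω, f ω ∂μ ≤ c * ∫ ω, g ω ∂μ := by
  rw [← integral_const_mul]
  exact integral_mono hf (hg.const_mul c) hfg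

end Probability

theorem expected_lyapunov_recursion_general {N : ℕ}
    {Ω : Type*} {mΩ : MeasurableSpace Ω} (μ : Measure Ω) [IsProbabilityMeasure μ]
    (ℱ : Filtration ℕ mΩ)
    (L : Matrix (Fin N) (Fin N) ℝ) (hLsymm : L.IsSymm)
    (hL1 : L.mulVec (fun _ => (1 : ℝ)) = 0)
    (lam : ℝ)
    (hgap : ∀ v : Fin N → ℝ, (∑ i, v i) = 0 →
      lam * (∑ i, (v i) ^ 2) ≤ v ⬝ᵥ L.mulVec v)
    (α : ℕ → ℝ) (hα_pos : ∀ k, 0 < α k)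
    (M : ℝ)
    (w : ℕ → Ω → Fin N → ℝ)
    (hw_L2 : ∀ k, MemLp (w k) 2 μ)
    (hw_cond : ∀ k i, μ[(fun ω => w k ω i) | ℱ k] =ᵐ[μ] 0)
    (hw_bound : ∀ k, ∫ ω, (∑ i, (w k ω i) ^ 2) ∂μ ≤ M)
    (x : ℕ → Ω → Fin N → ℝ) (ξ : Fin N → ℝ) (hx0 : ∀ ω, x 0 ω = ξ)
    (hx_meas : ∀ k, Measurable[ℱ k] (x k))
    (hrec : ∀ k ω, x (k + 1) ω =
      ((1 : Matrix (Fin N) (Fin N) ℝ) - α k • L).mulVec (x k ω) + α k • w k ω) :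
    ∀ k : ℕ,
      (∫ ω, ∑ i, ((((1 : Matrix (Fin N) (Fin N) ℝ)
          - Matrix.of fun _ _ => (1 : ℝ) / N).mulVec (x (k + 1) ω)) i) ^ 2 ∂μ)
        ≤ (1 - 2 * α k * lam + (α k) ^ 2 * (specNorm L) ^ 2) *
            (∫ ω, ∑ i, ((((1 : Matrix (Fin N) (Fin N) ℝ)
              - Matrix.of fun _ _ => (1 : ℝ) / N).mulVec (x k ω)) i) ^ 2 ∂μ)
          + (α k) ^ 2 * (specNorm ((1 : Matrix (Fin N) (Fin N) ℝ)
              - Matrix.of fun _ _ => (1 : ℝ) / N)) ^ 2 * M := by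
  intro k
  set P : Matrix (Fin N) (Fin N) ℝ := 1 - of fun _ _ => (1 : ℝ) / N
  set A : Matrix (Fin N) (Fin N) ℝ := 1 - α k • L
  have hx2 : ∀ n, MemLp (x n) 2 μ := by
    intro n
    induction n with
    | zero => simpa [funext hx0] using memLp_const ξ
    | succ n ih =>
      rw [funext (hrec n)]
      refine MemLp.add ?_ ?_
      · exact ih.mulVec _
      · exact (hw_L2 n).const_smul (α n)
  have hcomm : Commute P A :=
    (Commute.one_left A).sub_left ((Commute.one_right _).sub_right
      ((hLsymm.commute_of_const hL1 _).smul_right (α k)))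
  have hdecomp : ∀ ω, P *ᵥ x (k + 1) ω = A *ᵥ (P *ᵥ x k ω) + α k • (P *ᵥ w k ω) := fun ω => by
    rw [hrec, mulVec_add, mulVec_smul, mulVec_mulVec, hcomm.eq, ← mulVec_mulVec]
  have hdrift : ∫ ω, ∑ i, (A *ᵥ (P *ᵥ x k ω)) i ^ 2 ∂μ
      ≤ (1 - 2 * α k * lam + α k ^ 2 * specNorm L ^ 2) * ∫ ω, ∑ i, (P *ᵥ x k ω) i ^ 2 ∂μ :=
    integral_le_mul_integral (integrable_sum_sq (((hx2 k).mulVec P).mulVec A))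
      (integrable_sum_sq ((hx2 k).mulVec P)) fun ω => sum_sq_one_sub_smul_mulVec_le L
        (hα_pos k).le (hgap _ (sum_one_sub_averaging_mulVec_eq_zero _))
  have hnoise : ∫ ω, ∑ i, (P *ᵥ w k ω) i ^ 2 ∂μ ≤ specNorm P ^ 2 * M :=
    (integral_le_mul_integral (integrable_sum_sq ((hw_L2 k).mulVec P))
      (integrable_sum_sq (hw_L2 k)) fun ω => sum_sq_mulVec_le_specNorm_sq P (w k ω)).trans
      (mul_le_mul_of_nonneg_left (hw_bound k) (sq_nonneg _))
  have hPx : Measurable[ℱ k] fun ω => P *ᵥ x k ω :=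
    (continuous_const.matrix_mulVec continuous_id).measurable.comp (hx_meas k)
  simp_rw [hdecomp]
  rw [integral_sum_sq_mulVec_add_smul_mulVec (ℱ.le k) hPx ((hx2 k).mulVec P) (hw_L2 k) (hw_cond k)]
  linarith [mul_le_mul_of_nonneg_left hnoise (sq_nonneg (α k))]

/-- One-step expected Lyapunov inequality (used in the proof of Theorem 1):
`E[V(k+1)] ≤ (1 - 2 α(k) λ + α(k)² ‖L̄‖²) E[V(k)] + α(k)² ‖I - J‖² M`. -/
theorem expected_lyapunov_recursion {N : ℕ} (hN : 2 ≤ N)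
    {Ω : Type*} {mΩ : MeasurableSpace Ω} (μ : Measure Ω) [IsProbabilityMeasure μ]
    (ℱ : Filtration ℕ mΩ)
    (L : Matrix (Fin N) (Fin N) ℝ) (hLsymm : L.IsSymm)
    (hL1 : L.mulVec (fun _ => (1 : ℝ)) = 0)
    (lam : ℝ) (hlam : 0 < lam)
    (hgap : ∀ v : Fin N → ℝ, (∑ i, v i) = 0 →
      lam * (∑ i, (v i) ^ 2) ≤ v ⬝ᵥ L.mulVec v)
    (α : ℕ → ℝ) (hα_pos : ∀ k, 0 < α k)
    (hdiag : ∀ (i : Fin N) (k : ℕ), 0 < 1 - α k * L i i)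
    (hα_div : Tendsto (fun n => ∑ k ∈ Finset.range n, α k) atTop atTop)
    (hα_sq : Summable (fun k => (α k) ^ 2))
    (M : ℝ) (hM : 0 ≤ M)
    (w : ℕ → Ω → Fin N → ℝ)
    (hw_meas : ∀ k, Measurable[ℱ (k + 1)] (w k))
    (hw_L2 : ∀ k, MemLp (w k) 2 μ)
    (hw_cond : ∀ k i, μ[(fun ω => w k ω i) | ℱ k] =ᵐ[μ] 0)
    (hw_bound : ∀ k, ∫ ω, (∑ i, (w k ω i) ^ 2) ∂μ ≤ M)
    (x : ℕ → Ω → Fin N → ℝ) (ξ : Fin N → ℝ) (hx0 : ∀ ω, x 0 ω = ξ)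
    (hx_meas : ∀ k, Measurable[ℱ k] (x k))
    (hrec : ∀ k ω, x (k + 1) ω =
      ((1 : Matrix (Fin N) (Fin N) ℝ) - α k • L).mulVec (x k ω) + α k • w k ω) :
    ∀ k : ℕ,
      (∫ ω, ∑ i, ((((1 : Matrix (Fin N) (Fin N) ℝ)
          - Matrix.of fun _ _ => (1 : ℝ) / N).mulVec (x (k + 1) ω)) i) ^ 2 ∂μ)
        ≤ (1 - 2 * α k * lam + (α k) ^ 2 * (specNorm L) ^ 2) *
            (∫ ω, ∑ i, ((((1 : Matrix (Fin N) (Fin N) ℝ)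
              - Matrix.of fun _ _ => (1 : ℝ) / N).mulVec (x k ω)) i) ^ 2 ∂μ)
          + (α k) ^ 2 * (specNorm ((1 : Matrix (Fin N) (Fin N) ℝ)
              - Matrix.of fun _ _ => (1 : ℝ) / N)) ^ 2 * M :=
  expected_lyapunov_recursion_general μ ℱ L hLsymm hL1 lam hgap α hα_pos M w hw_L2 hw_cond hw_bound
    x ξ hx0 hx_meas hrec
end

section
/- Under the stated setting, the multi-agent system achieves almost sure consensus (Theorem 3): there exists a random variable x* : Ω → ℝ such that for every i ∈ {1,…,N}, x_i(k) → x* almost surely as k → ∞. -/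
/-!
Write `𝟙` for the all-ones vector. Since `L` is symmetric with `L 𝟙 = 0`, the average of the
states moves only by the averaged noise, and the noise series `∑ α k • w k` converges almost
surely: its partial sums form a martingale whose increments are orthogonal in `L²`, so
`∑ (α k)² < ∞` bounds it in `L²`. Subtracting the tail of that series from `x k` leaves a sequence
`z k` whose component along `𝟙` is constant and whose component `u k` orthogonal to `𝟙` obeys
`u (k+1) = (1 - α k • L) u k - α k • L (δ k)` with `δ k → 0`. Once `α k` is small the spectral gap
makes `1 - α k • L` a contraction by the factor `1 - α k * lam / 2` on `𝟙ᗮ`, and `∑ α k = ∞` then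
drives `u k` to `0`.
-/

open MeasureTheory Filter Matrix Finset Topology
open scoped RealInnerProductSpace

theorem tendsto_zero_of_eventually_le_one_sub_mul {β d : ℕ → ℝ}
    (hβ : Tendsto (fun n => ∑ k ∈ range n, β k) atTop atTop) (hd0 : ∀ k, 0 ≤ d k)
    (hd : ∀ᶠ k in atTop, d (k + 1) ≤ (1 - β k) * d k) :
    Tendsto d atTop (𝓝 0) := by
  obtain ⟨K, hK⟩ := hd.exists_forall_of_atTop
  have hdecay : ∀ n ≥ K,
      d n ≤ Real.exp (∑ k ∈ range K, β k - ∑ k ∈ range n, β k) * d K := by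
    intro n hn
    induction n, hn using Nat.le_induction with
    | base => simp
    | succ n hn ih =>
      calc d (n + 1) ≤ (1 - β n) * d n := hK n hn
        _ ≤ Real.exp (-β n) * d n := by
          gcongr
          · exact hd0 n
          · linarith [Real.add_one_le_exp (-β n)]
        _ ≤ Real.exp (-β n) * (Real.exp (∑ k ∈ range K, β k - ∑ k ∈ range n, β k) * d K) := by
          gcongr
        _ = Real.exp (∑ k ∈ range K, β k - ∑ k ∈ range (n + 1), β k) * d K := by
          rw [← mul_assoc, ← Real.exp_add, sum_range_succ]
          ring_nf
  have hbound : Tendsto (fun n => Real.exp (∑ k ∈ range K, β k - ∑ k ∈ range n, β k) * d K)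
      atTop (𝓝 0) := by
    have := Real.tendsto_exp_atBot.comp
      (tendsto_atBot_add_const_left _ (∑ k ∈ range K, β k) (tendsto_neg_atTop_atBot.comp hβ))
    simpa [Function.comp_def, ← sub_eq_add_neg] using this.mul_const (d K)
  exact squeeze_zero' (Eventually.of_forall hd0) (eventually_atTop.2 ⟨K, hdecay⟩) hbound

theorem tendsto_zero_of_le_one_sub_mul_add_mul {β ε u : ℕ → ℝ}
    (hβ : ∀ᶠ k in atTop, 0 ≤ β k ∧ β k ≤ 1)
    (hβ_sum : Tendsto (fun n => ∑ k ∈ range n, β k) atTop atTop)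
    (hε : Tendsto ε atTop (𝓝 0)) (hu0 : ∀ k, 0 ≤ u k)
    (hu : ∀ᶠ k in atTop, u (k + 1) ≤ (1 - β k) * u k + β k * ε k) :
    Tendsto u atTop (𝓝 0) := by
  refine tendsto_order.2 ⟨fun a ha => Eventually.of_forall fun k => ha.trans_le (hu0 k),
    fun a ha => ?_⟩
  -- Above the level `a / 2` the excess of `u` contracts geometrically.
  set d : ℕ → ℝ := fun k => max (u k - a / 2) 0
  have hd : ∀ᶠ k in atTop, d (k + 1) ≤ (1 - β k) * d k := by
    filter_upwards [hβ, hu, hε.eventually (eventually_le_nhds (half_pos ha))]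
      with k ⟨hβ0, hβ1⟩ hk hεk
    have hd_k : u k - a / 2 ≤ d k := le_max_left _ _
    refine max_le ?_ (mul_nonneg (by linarith) (le_max_right _ _))
    nlinarith
  have hd_lim := tendsto_zero_of_eventually_le_one_sub_mul hβ_sum (d := d)
    (fun k => le_max_right _ _) hd
  filter_upwards [hd_lim.eventually (eventually_lt_nhds (half_pos ha))] with k hk
  have : u k - a / 2 ≤ d k := le_max_left _ _
  linarith

section Martingale

variable {Ω : Type*} {mΩ : MeasurableSpace Ω} {μ : Measure Ω} [IsFiniteMeasure μ]

theorem integral_mul_eq_zero_of_condExp_eq_zero_s7 {m : MeasurableSpace Ω}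
    (hm : m ≤ mΩ) {g Y : Ω → ℝ} (hg_meas : StronglyMeasurable[m] g) (hg : MemLp g 2 μ)
    (hY : MemLp Y 2 μ) (hY_cond : μ[Y | m] =ᵐ[μ] 0) :
    ∫ ω, g ω * Y ω ∂μ = 0 := by
  have hpull : μ[g * Y | m] =ᵐ[μ] g * μ[Y | m] :=
    condExp_mul_of_stronglyMeasurable_left hg_meas (hg.integrable_mul hY) (hY.integrable one_le_two)
  calc ∫ ω, g ω * Y ω ∂μ = ∫ ω, (μ[g * Y | m]) ω ∂μ := (integral_condExp hm).symm
    _ = ∫ _, (0 : ℝ) ∂μ :=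
      integral_congr_ae (hpull.trans (hY_cond.mono fun ω hω => by simp [hω]))
    _ = 0 := integral_zero _ _

variable {ℱ : Filtration ℕ mΩ} {Y : ℕ → Ω → ℝ}

theorem integral_sq_sum_range_of_condExp_eq_zero
    (hY_meas : ∀ k, StronglyMeasurable[ℱ (k + 1)] (Y k)) (hY : ∀ k, MemLp (Y k) 2 μ)
    (hY_cond : ∀ k, μ[Y k | ℱ k] =ᵐ[μ] 0) (n : ℕ) :
    ∫ ω, (∑ k ∈ range n, Y k ω) ^ 2 ∂μ = ∑ k ∈ range n, ∫ ω, Y k ω ^ 2 ∂μ := by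
  induction n with
  | zero => simp
  | succ n ih =>
    set f : Ω → ℝ := fun ω => ∑ k ∈ range n, Y k ω
    have hf : MemLp f 2 μ := memLp_finsetSum _ fun k _ => hY k
    have hf_meas : StronglyMeasurable[ℱ n] f :=
      stronglyMeasurable_fun_sum _ fun k hk =>
        (hY_meas k).mono (ℱ.mono (mem_range.1 hk))
    have horth : ∫ ω, f ω * Y n ω ∂μ = 0 :=
      integral_mul_eq_zero_of_condExp_eq_zero_s7 (ℱ.le n) hf_meas hf (hY n) (hY_cond n)
    have hexpand : ∀ ω, (∑ k ∈ range (n + 1), Y k ω) ^ 2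
        = f ω ^ 2 + 2 * (f ω * Y n ω) + Y n ω ^ 2 := fun ω => by
      rw [sum_range_succ]; ring
    have hcross : Integrable (fun ω => 2 * (f ω * Y n ω)) μ :=
      (hf.integrable_mul (hY n)).const_mul 2
    simp_rw [hexpand]
    rw [integral_add (f := fun ω => f ω ^ 2 + 2 * (f ω * Y n ω)) (g := fun ω => Y n ω ^ 2)
        (hf.integrable_sq.add hcross) (hY n).integrable_sq,
      integral_add (f := fun ω => f ω ^ 2) hf.integrable_sq hcross, integral_const_mul, horth, ih,
      sum_range_succ]
    ring

theorem Martingale.ae_tendsto_limitProcess_of_integral_sq_le {f : ℕ → Ω → ℝ}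
    (hf : Martingale f ℱ μ) (hf_sq : ∀ n, MemLp (f n) 2 μ) {R : ℝ}
    (hR : ∀ n, ∫ ω, f n ω ^ 2 ∂μ ≤ R) :
    ∀ᵐ ω ∂μ, Tendsto (fun n => f n ω) atTop (𝓝 (ℱ.limitProcess f μ ω)) := by
  refine hf.submartingale.ae_tendsto_limitProcess (R := (R + μ.real Set.univ).toNNReal) fun n => ?_
  have hnorm_le : ∀ ω, ‖f n ω‖ ≤ f n ω ^ 2 + 1 := fun ω => by
    rw [Real.norm_eq_abs]
    nlinarith [sq_abs (f n ω), sq_nonneg (|f n ω| - 1)]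
  have hint : ∫ ω, ‖f n ω‖ ∂μ ≤ R + μ.real Set.univ := by
    calc ∫ ω, ‖f n ω‖ ∂μ ≤ ∫ ω, (f n ω ^ 2 + 1) ∂μ :=
          integral_mono ((hf_sq n).integrable one_le_two).norm
            ((hf_sq n).integrable_sq.add (integrable_const 1)) hnorm_le
      _ ≤ R + μ.real Set.univ := by
          rw [integral_add (hf_sq n).integrable_sq (integrable_const 1)]
          simpa using hR n
  rw [eLpNorm_one_eq_lintegral_enorm,
    ← ofReal_integral_norm_eq_lintegral_enorm ((hf_sq n).integrable one_le_two)]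
  exact ENNReal.ofReal_le_ofReal hint

theorem exists_ae_tendsto_sum_range_of_condExp_eq_zero
    (hY_meas : ∀ k, StronglyMeasurable[ℱ (k + 1)] (Y k)) (hY : ∀ k, MemLp (Y k) 2 μ)
    (hY_cond : ∀ k, μ[Y k | ℱ k] =ᵐ[μ] 0)
    (hY_sum : Summable fun k => ∫ ω, Y k ω ^ 2 ∂μ) :
    ∃ g : Ω → ℝ, Measurable g ∧
      ∀ᵐ ω ∂μ, Tendsto (fun n => ∑ k ∈ range n, Y k ω) atTop (𝓝 (g ω)) := by
  set f : ℕ → Ω → ℝ := fun n ω => ∑ k ∈ range n, Y k ω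
  have hf_meas : StronglyAdapted ℱ f := fun n =>
    stronglyMeasurable_fun_sum _ fun k hk =>
      (hY_meas k).mono (ℱ.mono (mem_range.1 hk))
  have hf_sq : ∀ n, MemLp (f n) 2 μ := fun n => memLp_finsetSum _ fun k _ => hY k
  have hf : Martingale f ℱ μ := by
    refine martingale_of_condExp_sub_eq_zero_nat hf_meas
      (fun n => (hf_sq n).integrable one_le_two) fun n => ?_
    have hinc : f (n + 1) - f n = Y n := by
      funext ω
      simp [f, sum_range_succ]
    rw [hinc]
    exact hY_cond n
  refine ⟨ℱ.limitProcess f μ, Filtration.stronglyMeasurable_limit_process'.measurable,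
    Martingale.ae_tendsto_limitProcess_of_integral_sq_le hf hf_sq
      (R := ∑' k, ∫ ω, Y k ω ^ 2 ∂μ) fun n => ?_⟩
  rw [integral_sq_sum_range_of_condExp_eq_zero hY_meas hY hY_cond]
  exact hY_sum.sum_le_tsum _ fun k _ => integral_nonneg fun ω => sq_nonneg _


theorem exists_ae_tendsto_sum_range_mul_of_condExp_eq_zero {α : ℕ → ℝ}
    (hα : Summable fun k => α k ^ 2) {M : ℝ}
    (hY_meas : ∀ k, StronglyMeasurable[ℱ (k + 1)] (Y k)) (hY : ∀ k, MemLp (Y k) 2 μ)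
    (hY_cond : ∀ k, μ[Y k | ℱ k] =ᵐ[μ] 0) (hY_bound : ∀ k, ∫ ω, Y k ω ^ 2 ∂μ ≤ M) :
    ∃ g : Ω → ℝ, Measurable g ∧
      ∀ᵐ ω ∂μ, Tendsto (fun n => ∑ k ∈ range n, α k * Y k ω) atTop (𝓝 (g ω)) := by
  refine exists_ae_tendsto_sum_range_of_condExp_eq_zero (Y := fun k ω => α k * Y k ω)
    (fun k => (hY_meas k).const_mul (α k)) (fun k => (hY k).const_mul (α k)) (fun k => ?_) ?_
  · refine (condExp_smul (α k) (Y k) (ℱ k)).trans ?_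
    filter_upwards [hY_cond k] with ω hω
    simp [hω]
  · refine (hα.mul_right M).of_nonneg_of_le (fun k => integral_nonneg fun ω => sq_nonneg _)
      fun k => ?_
    simp_rw [mul_pow]
    rw [integral_const_mul]
    exact mul_le_mul_of_nonneg_left (hY_bound k) (sq_nonneg _)

theorem exists_ae_tendsto_sum_range_smul_of_condExp_eq_zero {ι : Type*} [Fintype ι]
    {α : ℕ → ℝ} (hα : Summable fun k => α k ^ 2) {M : ℝ} {w : ℕ → Ω → ι → ℝ}
    (hw_meas : ∀ k, Measurable[ℱ (k + 1)] (w k)) (hw : ∀ k, MemLp (w k) 2 μ)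
    (hw_cond : ∀ k i, μ[fun ω => w k ω i | ℱ k] =ᵐ[μ] 0)
    (hw_bound : ∀ k, ∫ ω, ∑ i, w k ω i ^ 2 ∂μ ≤ M) :
    ∃ s : Ω → EuclideanSpace ℝ ι, Measurable s ∧ ∀ᵐ ω ∂μ,
      Tendsto (fun n => ∑ k ∈ range n, α k • WithLp.toLp 2 (w k ω)) atTop (𝓝 (s ω)) := by
  have hw_coord : ∀ k i, MemLp (fun ω => w k ω i) 2 μ := fun k i =>
    (ContinuousLinearMap.proj (R := ℝ) (φ := fun _ : ι => ℝ) i).comp_memLp' (hw k)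
  have hw_coord_bound : ∀ k i, ∫ ω, w k ω i ^ 2 ∂μ ≤ M := fun k i =>
    (integral_mono (hw_coord k i).integrable_sq
      (integrable_finsetSum _ fun j _ => (hw_coord k j).integrable_sq)
      fun ω => single_le_sum (f := fun j => w k ω j ^ 2) (fun j _ => sq_nonneg _)
        (mem_univ i)).trans (hw_bound k)
  choose g hg_meas hg using fun i => exists_ae_tendsto_sum_range_mul_of_condExp_eq_zero hα
    (fun k => ((measurable_pi_apply i).comp (hw_meas k)).stronglyMeasurable)
    (fun k => hw_coord k i) (fun k => hw_cond k i) fun k => hw_coord_bound k i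
  refine ⟨fun ω => WithLp.toLp 2 fun i => g i ω,
    (PiLp.continuous_toLp 2 _).measurable.comp (measurable_pi_lambda _ hg_meas), ?_⟩
  filter_upwards [ae_all_iff.2 hg] with ω hω
  exact (((PiLp.continuous_toLp 2 _).tendsto _).comp (tendsto_pi_nhds.2 hω)).congr fun n => by
    ext i
    simp

end Martingale

section InnerProductSpace

variable {E : Type*} [NormedAddCommGroup E] [InnerProductSpace ℝ E] {A : E →L[ℝ] E} {lam : ℝ}

theorem norm_sub_smul_le_of_coercive {r : ℝ} {u : E} (hu : lam * ‖u‖ ^ 2 ≤ ⟪u, A u⟫)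
    (hr : 0 ≤ r) (hr_norm : r * ‖A‖ ^ 2 ≤ lam) (hr_lam : r * lam ≤ 1) :
    ‖u - r • A u‖ ≤ (1 - r * lam / 2) * ‖u‖ := by
  have hAu : ‖A u‖ ^ 2 ≤ ‖A‖ ^ 2 * ‖u‖ ^ 2 := by
    rw [← mul_pow]
    exact pow_le_pow_left₀ (norm_nonneg _) (A.le_opNorm u) 2
  have hsq : ‖u - r • A u‖ ^ 2 ≤ ((1 - r * lam / 2) * ‖u‖) ^ 2 := by
    rw [norm_sub_sq_real, real_inner_smul_right, norm_smul, Real.norm_of_nonneg hr]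
    nlinarith [mul_le_mul_of_nonneg_left hu hr, mul_le_mul_of_nonneg_left hAu (mul_nonneg hr hr),
      mul_le_mul_of_nonneg_right hr_norm (mul_nonneg hr (sq_nonneg ‖u‖)),
      sq_nonneg (r * lam * ‖u‖)]
  exact (pow_le_pow_iff_left₀ (norm_nonneg _)
    (mul_nonneg (by linarith) (norm_nonneg _)) two_ne_zero).1 hsq

variable {α : ℕ → ℝ}

theorem tendsto_zero_of_coercive_recursion (hlam : 0 < lam) (hα_pos : ∀ k, 0 ≤ α k)
    (hα_lim : Tendsto α atTop (𝓝 0))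
    (hα_sum : Tendsto (fun n => ∑ k ∈ range n, α k) atTop atTop) {u δ : ℕ → E}
    (hcoer : ∀ k, lam * ‖u k‖ ^ 2 ≤ ⟪u k, A (u k)⟫) (hδ : Tendsto δ atTop (𝓝 0))
    (hu : ∀ k, u (k + 1) = u k - α k • A (u k + δ k)) :
    Tendsto u atTop (𝓝 0) := by
  have hsmall : ∀ᶠ k in atTop, α k * ‖A‖ ^ 2 ≤ lam ∧ α k * lam ≤ 1 :=
    ((hα_lim.mul_const _).eventually (eventually_le_nhds (by simpa using hlam))).and
      ((hα_lim.mul_const _).eventually (eventually_le_nhds (by simp)))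
  rw [tendsto_zero_iff_norm_tendsto_zero] at hδ ⊢
  refine tendsto_zero_of_le_one_sub_mul_add_mul (β := fun k => α k * lam / 2)
    (ε := fun k => 2 * ‖A‖ / lam * ‖δ k‖) ?_ ?_ ?_ (fun k => norm_nonneg _) ?_
  · filter_upwards [hsmall] with k hk
    exact ⟨by have := hα_pos k; positivity, by linarith [hk.2]⟩
  · rw [show (fun n => ∑ k ∈ range n, α k * lam / 2) = fun n => (∑ k ∈ range n, α k) * lam / 2
      by simp [sum_div, sum_mul]]
    exact (hα_sum.atTop_mul_const hlam).atTop_div_const two_pos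
  · simpa using hδ.const_mul (2 * ‖A‖ / lam)
  · filter_upwards [hsmall] with k hk
    calc ‖u (k + 1)‖ = ‖(u k - α k • A (u k)) - α k • A (δ k)‖ := by
          rw [hu, map_add, smul_add, sub_sub]
      _ ≤ ‖u k - α k • A (u k)‖ + α k * (‖A‖ * ‖δ k‖) := by
          refine (norm_sub_le _ _).trans (add_le_add_right ?_ _)
          rw [norm_smul, Real.norm_of_nonneg (hα_pos k)]
          exact mul_le_mul_of_nonneg_left (A.le_opNorm _) (hα_pos k)
      _ ≤ (1 - α k * lam / 2) * ‖u k‖ + α k * (‖A‖ * ‖δ k‖) := by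
          gcongr
          exact norm_sub_smul_le_of_coercive (hcoer k) (hα_pos k) hk.1 hk.2
      _ = (1 - α k * lam / 2) * ‖u k‖ + α k * lam / 2 * (2 * ‖A‖ / lam * ‖δ k‖) := by
          field_simp

theorem tendsto_of_consensus_recursion (hlam : 0 < lam) (hα_pos : ∀ k, 0 ≤ α k)
    (hα_lim : Tendsto α atTop (𝓝 0))
    (hα_sum : Tendsto (fun n => ∑ k ∈ range n, α k) atTop atTop) {e : E}
    (hAe : A e = 0) (he_range : ∀ v, ⟪e, A v⟫ = 0)
    (hcoer : ∀ v, ⟪e, v⟫ = 0 → lam * ‖v‖ ^ 2 ≤ ⟪v, A v⟫) {x w : ℕ → E} {s : E}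
    (hx : ∀ k, x (k + 1) = x k - α k • A (x k) + α k • w k)
    (hw : Tendsto (fun n => ∑ k ∈ range n, α k • w k) atTop (𝓝 s)) :
    Tendsto x atTop (𝓝 ((⟪e, x 0 + s⟫ / ‖e‖ ^ 2) • e)) := by
  set c := ⟪e, x 0 + s⟫ / ‖e‖ ^ 2
  -- `z` absorbs the noise still to come; it moves only by `- α A z` up to a vanishing error.
  set δ : ℕ → E := fun k => ∑ j ∈ range k, α j • w j - s
  set z : ℕ → E := fun k => x k - δ k
  have hδ : Tendsto δ atTop (𝓝 0) := by simpa [δ] using hw.sub_const s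
  have hz : ∀ k, z (k + 1) = z k - α k • A (z k + δ k) := fun k => by
    simp only [z, δ, hx, sum_range_succ, sub_add_cancel]
    abel
  have hz_inner : ∀ k, ⟪e, z k⟫ = ⟪e, x 0 + s⟫ := by
    intro k
    induction k with
    | zero => simp [z, δ]
    | succ k ih => rw [hz, inner_sub_right, real_inner_smul_right, he_range, ih]; ring
  have hc : c * ‖e‖ ^ 2 = ⟪e, x 0 + s⟫ := by
    rcases eq_or_ne e 0 with rfl | he
    · simp
    · exact div_mul_cancel₀ _ (by positivity)
  set u : ℕ → E := fun k => z k - c • e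
  have hu_perp : ∀ k, ⟪e, u k⟫ = 0 := fun k => by
    simp only [u, inner_sub_right, real_inner_smul_right, real_inner_self_eq_norm_sq, hz_inner, hc,
      sub_self]
  have hu : ∀ k, u (k + 1) = u k - α k • A (u k + δ k) := fun k => by
    simp only [u, hz, map_add, map_sub, map_smul, hAe, smul_zero, sub_zero]
    abel
  have hu_lim := tendsto_zero_of_coercive_recursion hlam hα_pos hα_lim hα_sum
    (fun k => hcoer _ (hu_perp k)) hδ hu
  have hx_eq : ∀ k, x k = u k + c • e + δ k := fun k => by simp [u, z]
  simpa [← hx_eq] using (hu_lim.add_const (c • e)).add hδ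

end InnerProductSpace

section Laplacian

variable {ι : Type*} [Fintype ι] [DecidableEq ι] {L : Matrix ι ι ℝ}

theorem inner_toLp_one_toEuclideanCLM_eq_zero (hL : L.IsSymm) (h1 : L *ᵥ (fun _ => 1) = 0)
    (v : EuclideanSpace ℝ ι) :
    ⟪WithLp.toLp 2 (fun _ => (1 : ℝ)), toEuclideanCLM (𝕜 := ℝ) L v⟫ = 0 := by
  rw [inner_toEuclideanCLM, dotProduct_mulVec, ← mulVec_transpose, hL.eq]
  simp [h1]

theorem coercive_toEuclideanCLM {lam : ℝ}
    (hgap : ∀ v : ι → ℝ, ∑ i, v i = 0 → lam * ∑ i, v i ^ 2 ≤ v ⬝ᵥ L *ᵥ v)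
    (v : EuclideanSpace ℝ ι) (hv : ⟪WithLp.toLp 2 (fun _ => (1 : ℝ)), v⟫ = 0) :
    lam * ‖v‖ ^ 2 ≤ ⟪v, toEuclideanCLM (𝕜 := ℝ) L v⟫ := by
  rw [inner_toEuclideanCLM, EuclideanSpace.real_norm_sq_eq]
  refine hgap v ?_
  simpa [PiLp.inner_apply] using hv

end Laplacian

theorem almost_sure_consensus_general {N : ℕ}
    {Ω : Type*} {mΩ : MeasurableSpace Ω} (μ : MeasureTheory.Measure Ω) [MeasureTheory.IsProbabilityMeasure μ]
    (ℱ : MeasureTheory.Filtration ℕ mΩ)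
    (L : Matrix (Fin N) (Fin N) ℝ) (hLsymm : L.IsSymm)
    (hL1 : L.mulVec (fun _ => (1 : ℝ)) = 0)
    (lam : ℝ) (hlam : 0 < lam)
    (hgap : ∀ v : Fin N → ℝ, (∑ i, v i) = 0 →
      lam * (∑ i, (v i) ^ 2) ≤ v ⬝ᵥ L.mulVec v)
    (α : ℕ → ℝ) (hα_pos : ∀ k, 0 < α k)
    (hα_div : Filter.Tendsto (fun n => ∑ k ∈ Finset.range n, α k) Filter.atTop Filter.atTop)
    (hα_sq : Summable (fun k => (α k) ^ 2))
    (M : ℝ)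
    (w : ℕ → Ω → Fin N → ℝ)
    (hw_meas : ∀ k, Measurable[ℱ (k + 1)] (w k))
    (hw_L2 : ∀ k, MeasureTheory.MemLp (w k) 2 μ)
    (hw_cond : ∀ k i, μ[(fun ω => w k ω i) | ℱ k] =ᵐ[μ] 0)
    (hw_bound : ∀ k, ∫ ω, (∑ i, (w k ω i) ^ 2) ∂μ ≤ M)
    (x : ℕ → Ω → Fin N → ℝ) (ξ : Fin N → ℝ) (hx0 : ∀ ω, x 0 ω = ξ)
    (hrec : ∀ k ω, x (k + 1) ω =
      ((1 : Matrix (Fin N) (Fin N) ℝ) - α k • L).mulVec (x k ω) + α k • w k ω) :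
    ∃ xstar : Ω → ℝ, Measurable xstar ∧
      ∀ i : Fin N, ∀ᵐ ω ∂μ,
        Tendsto (fun k => x k ω i) atTop (nhds (xstar ω)) := by
  have hα_lim : Tendsto α atTop (𝓝 0) := by
    simpa [Real.sqrt_sq (hα_pos _).le] using hα_sq.tendsto_atTop_zero.sqrt
  obtain ⟨s, hs_meas, hs⟩ :=
    exists_ae_tendsto_sum_range_smul_of_condExp_eq_zero hα_sq hw_meas hw_L2 hw_cond hw_bound
  set e : EuclideanSpace ℝ (Fin N) := WithLp.toLp 2 fun _ => 1
  refine ⟨fun ω => ⟪e, WithLp.toLp 2 ξ + s ω⟫ / ‖e‖ ^ 2, ?_, fun i => ?_⟩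
  · exact ((continuous_const.inner continuous_id).measurable.comp
      (measurable_const.add hs_meas)).div_const _
  filter_upwards [hs] with ω hω
  have hx_lim := tendsto_of_consensus_recursion (A := toEuclideanCLM (𝕜 := ℝ) L) hlam
    (fun k => (hα_pos k).le) hα_lim hα_div (e := e) (by simp [e, hL1])
    (inner_toLp_one_toEuclideanCLM_eq_zero hLsymm hL1) (coercive_toEuclideanCLM hgap)
    (x := fun k => WithLp.toLp 2 (x k ω)) (fun k => by ext j; simp [hrec, sub_mulVec, smul_mulVec])
    hω
  simpa [hx0, e, Function.comp_def] using ((PiLp.continuous_apply 2 _ i).tendsto _).comp hx_lim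

/-- Theorem 3 (almost sure consensus): there is a random variable `x*` such that
every agent's state converges to `x*` almost surely. -/
theorem almost_sure_consensus {N : ℕ} (hN : 2 ≤ N)
    {Ω : Type*} {mΩ : MeasurableSpace Ω} (μ : MeasureTheory.Measure Ω) [MeasureTheory.IsProbabilityMeasure μ]
    (ℱ : MeasureTheory.Filtration ℕ mΩ)
    (L : Matrix (Fin N) (Fin N) ℝ) (hLsymm : L.IsSymm)
    (hL1 : L.mulVec (fun _ => (1 : ℝ)) = 0)
    (lam : ℝ) (hlam : 0 < lam)
    (hgap : ∀ v : Fin N → ℝ, (∑ i, v i) = 0 →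
      lam * (∑ i, (v i) ^ 2) ≤ v ⬝ᵥ L.mulVec v)
    (α : ℕ → ℝ) (hα_pos : ∀ k, 0 < α k)
    (hdiag : ∀ (i : Fin N) (k : ℕ), 0 < 1 - α k * L i i)
    (hα_div : Filter.Tendsto (fun n => ∑ k ∈ Finset.range n, α k) Filter.atTop Filter.atTop)
    (hα_sq : Summable (fun k => (α k) ^ 2))
    (M : ℝ) (hM : 0 ≤ M)
    (w : ℕ → Ω → Fin N → ℝ)
    (hw_meas : ∀ k, Measurable[ℱ (k + 1)] (w k))
    (hw_L2 : ∀ k, MeasureTheory.MemLp (w k) 2 μ)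
    (hw_cond : ∀ k i, μ[(fun ω => w k ω i) | ℱ k] =ᵐ[μ] 0)
    (hw_bound : ∀ k, ∫ ω, (∑ i, (w k ω i) ^ 2) ∂μ ≤ M)
    (x : ℕ → Ω → Fin N → ℝ) (ξ : Fin N → ℝ) (hx0 : ∀ ω, x 0 ω = ξ)
    (hx_meas : ∀ k, Measurable[ℱ k] (x k))
    (hrec : ∀ k ω, x (k + 1) ω =
      ((1 : Matrix (Fin N) (Fin N) ℝ) - α k • L).mulVec (x k ω) + α k • w k ω) :
    ∃ xstar : Ω → ℝ, Measurable xstar ∧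
      ∀ i : Fin N, ∀ᵐ ω ∂μ,
        Tendsto (fun k => x k ω i) atTop (nhds (xstar ω)) :=
  almost_sure_consensus_general μ ℱ L hLsymm hL1 lam hlam hgap α hα_pos hα_div hα_sq M w hw_meas
    hw_L2 hw_cond hw_bound x ξ hx0 hrec
end

section
/- Let N ≥ 1 and m ≥ 1 be integers, let L_1, …, L_m be real symmetric N×N matrices, let ᾱ ∈ [0,1], let α_1, …, α_m ∈ [0, ᾱ], and set K = max{1, max_{1≤i≤m} ‖L_i‖}, where ‖·‖ is the spectral norm. Let P = (I_N − α_m L_m)(I_N − α_{m−1} L_{m−1})⋯(I_N − α_1 L_1). Then ‖PᵀP − I_N + 2∑_{i=1}^m α_i L_i‖ ≤ ᾱ²(2^{2m} − 2m − 1)K^{2m}. -/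
open Matrix

/-!
Write each factor as `1 + xᵢ` with `xᵢ = -αᵢLᵢ`, so `‖xᵢ‖ ≤ ᾱK`. By symmetry `Pᵀ P` is the product
of `1 + x` over the palindromic list `x₁, …, xₘ, xₘ, …, x₁` of length `2m`, and the matrix to be
bounded is the part of degree at least two of that product. In any normed ring this remainder is
bounded by its scalar analogue `(1 + b)ⁿ - 1 - n b` with `b = ᾱK`, whose binomial terms
`C(n, k) bᵏ`, `k ≥ 2`, are each at most `C(n, k) ᾱ² Kⁿ` since `ᾱ ≤ 1 ≤ K`.
-/

open scoped Matrix.Norms.L2Operator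

theorem List.norm_sum_le_length_mul {E : Type*} [SeminormedAddCommGroup E] {b : ℝ}
    (l : List E) (hl : ∀ x ∈ l, ‖x‖ ≤ b) : ‖l.sum‖ ≤ l.length * b := by
  calc ‖l.sum‖ ≤ (l.map (‖·‖)).sum := by
        simpa using norm_multiset_sum_le (l : Multiset E)
    _ ≤ (l.map (‖·‖)).length • b := List.sum_le_card_nsmul _ _ (by simpa using hl)
    _ = l.length * b := by simp

theorem norm_prod_one_add_sub_one_sub_sum_le {R : Type*} [SeminormedRing R] {b : ℝ}
    (l : List R) (hl : ∀ x ∈ l, ‖x‖ ≤ b) :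
    ‖(l.map (1 + ·)).prod - 1 - l.sum‖ ≤ (1 + b) ^ l.length - 1 - l.length * b := by
  induction l with
  | nil => simp
  | cons x t ih =>
    simp only [List.forall_mem_cons] at hl
    obtain ⟨hx, ht⟩ := hl
    set E := (t.map (1 + ·)).prod - 1 - t.sum
    have hb : 0 ≤ b := (norm_nonneg x).trans hx
    have hE : ‖E‖ ≤ (1 + b) ^ t.length - 1 - t.length * b := ih ht
    have hS : ‖t.sum‖ ≤ t.length * b := t.norm_sum_le_length_mul ht
    have hsplit : ((x :: t).map (1 + ·)).prod - 1 - (x :: t).sum = E + x * E + x * t.sum := by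
      simp only [E, List.map_cons, List.prod_cons, List.sum_cons]
      noncomm_ring
    calc ‖((x :: t).map (1 + ·)).prod - 1 - (x :: t).sum‖
        ≤ ‖E‖ + ‖x‖ * ‖E‖ + ‖x‖ * ‖t.sum‖ := by
          rw [hsplit]
          refine (norm_add₃_le).trans ?_
          gcongr <;> exact norm_mul_le _ _
      _ ≤ (1 + b) * ((1 + b) ^ t.length - 1 - t.length * b) + b * (t.length * b) := by
          have := norm_nonneg E
          have := norm_nonneg t.sum
          nlinarith [mul_le_mul hx hE (norm_nonneg E) hb, mul_le_mul hx hS (norm_nonneg _) hb]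
      _ = (1 + b) ^ (x :: t).length - 1 - (x :: t).length * b := by
          simp only [List.length_cons, Nat.cast_succ]
          ring

theorem one_add_mul_pow_sub_le {a K : ℝ} (ha₀ : 0 ≤ a) (ha₁ : a ≤ 1) (hK : 1 ≤ K) (n : ℕ) :
    (1 + a * K) ^ n - 1 - n * (a * K) ≤ a ^ 2 * (2 ^ n - n - 1) * K ^ n := by
  induction n with
  | zero => simp
  | succ n ih =>
    have h2n : (n : ℝ) + 1 ≤ 2 ^ n := by exact_mod_cast Nat.lt_two_pow_self
    have hK₀ : 0 ≤ K := zero_le_one.trans hK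
    have hfactor : 1 + a * K ≤ 2 * K := by nlinarith
    have hquad : n * K ^ 2 ≤ n * K ^ (n + 1) := by
      rcases n with _ | n
      · simp
      · exact mul_le_mul_of_nonneg_left (pow_le_pow_right₀ hK (by omega)) n.succ.cast_nonneg
    calc (1 + a * K) ^ (n + 1) - 1 - ↑(n + 1) * (a * K)
        = (1 + a * K) * ((1 + a * K) ^ n - 1 - n * (a * K)) + a ^ 2 * (n * K ^ 2) := by
          push_cast; ring
      _ ≤ 2 * K * (a ^ 2 * (2 ^ n - n - 1) * K ^ n) + a ^ 2 * (n * K ^ (n + 1)) := by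
          have hrhs : 0 ≤ a ^ 2 * (2 ^ n - n - 1) * K ^ n := by
            have : (0 : ℝ) ≤ 2 ^ n - n - 1 := by linarith
            positivity
          have hmain := (mul_le_mul_of_nonneg_left ih (by positivity : 0 ≤ 1 + a * K)).trans
            (mul_le_mul_of_nonneg_right hfactor hrhs)
          have hrest := mul_le_mul_of_nonneg_left hquad (sq_nonneg a)
          linarith
      _ = a ^ 2 * (2 ^ (n + 1) - ↑(n + 1) - 1) * K ^ (n + 1) := by
          push_cast; ring

theorem Matrix.transpose_list_prod_reverse_of_isSymm {n α : Type*} [Fintype n] [DecidableEq n]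
    [CommSemiring α] (l : List (Matrix n n α)) (hl : ∀ A ∈ l, A.IsSymm) :
    l.reverse.prodᵀ = l.prod := by
  rw [transpose_list_prod, List.map_reverse, List.reverse_reverse]
  exact congrArg List.prod ((List.map_congr_left hl).trans l.map_id)

theorem Matrix.transpose_mul_self_list_prod_one_add_reverse {n α : Type*} [Fintype n]
    [DecidableEq n] [CommSemiring α] (l : List (Matrix n n α)) (hl : ∀ A ∈ l, A.IsSymm) :
    (l.map (1 + ·)).reverse.prodᵀ * (l.map (1 + ·)).reverse.prod
      = ((l ++ l.reverse).map (1 + ·)).prod := by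
  have hsymm : ∀ A ∈ l.map (1 + ·), A.IsSymm := by
    simp only [List.mem_map]
    rintro _ ⟨A, hA, rfl⟩
    exact isSymm_one.add (hl A hA)
  rw [transpose_list_prod_reverse_of_isSymm _ hsymm, List.map_append, List.prod_append,
    List.map_reverse]

theorem product_expansion_bound_general {N m : ℕ}
    (L : Fin m → Matrix (Fin N) (Fin N) ℝ) (hLsymm : ∀ i, (L i).IsSymm)
    (abar : ℝ) (habar0 : 0 ≤ abar) (habar1 : abar ≤ 1)
    (α : Fin m → ℝ) (hα0 : ∀ i, 0 ≤ α i) (hα1 : ∀ i, α i ≤ abar)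
    (K : ℝ) (hK : K = max 1 (⨆ i : Fin m, specNorm (L i))) :
    specNorm
        ((List.ofFn fun i : Fin m =>
            (1 : Matrix (Fin N) (Fin N) ℝ) - α i • L i).reverse.prodᵀ
          * (List.ofFn fun i : Fin m =>
            (1 : Matrix (Fin N) (Fin N) ℝ) - α i • L i).reverse.prod
          - 1 + (2 : ℝ) • ∑ i, α i • L i)
      ≤ abar ^ 2 * ((2 : ℝ) ^ (2 * m) - 2 * m - 1) * K ^ (2 * m) := by
  set D := List.ofFn fun i => -(α i • L i)
  have hfactors : (List.ofFn fun i => (1 : Matrix (Fin N) (Fin N) ℝ) - α i • L i)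
      = D.map (1 + ·) := by
    simp [D, List.map_ofFn, Function.comp_def, sub_eq_add_neg]
  have hsymm : ∀ A ∈ D, A.IsSymm := by
    simp only [D, List.mem_ofFn]
    rintro _ ⟨i, rfl⟩
    exact ((hLsymm i).smul _).neg
  have hexpand : (D.map (1 + ·)).reverse.prodᵀ * (D.map (1 + ·)).reverse.prod - 1
      + (2 : ℝ) • ∑ i, α i • L i
      = ((D ++ D.reverse).map (1 + ·)).prod - 1 - (D ++ D.reverse).sum := by
    rw [transpose_mul_self_list_prod_one_add_reverse _ hsymm, List.sum_append, List.sum_reverse,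
      List.sum_ofFn, Finset.sum_neg_distrib, two_smul]
    abel
  have hbound : ∀ A ∈ D ++ D.reverse, ‖A‖ ≤ abar * K := by
    simp only [List.mem_append, List.mem_reverse, or_self, D, List.mem_ofFn]
    rintro _ ⟨i, rfl⟩
    have hLK : specNorm (L i) ≤ K := hK ▸
      (le_ciSup (f := fun j => specNorm (L j)) (Set.finite_range _).bddAbove i).trans
        (le_max_right _ _)
    rw [norm_neg, norm_smul, Real.norm_of_nonneg (hα0 i)]
    exact mul_le_mul (hα1 i) hLK (norm_nonneg _) habar0
  have hK1 : 1 ≤ K := hK ▸ le_max_left _ _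
  calc specNorm _ = ‖((D ++ D.reverse).map (1 + ·)).prod - 1 - (D ++ D.reverse).sum‖ := by
        rw [hfactors, hexpand, specNorm, cstar_norm_def]
    _ ≤ (1 + abar * K) ^ (2 * m) - 1 - (2 * m : ℕ) * (abar * K) := by
        simpa [D, two_mul] using norm_prod_one_add_sub_one_sub_sum_le _ hbound
    _ ≤ abar ^ 2 * ((2 : ℝ) ^ (2 * m) - 2 * m - 1) * K ^ (2 * m) := by
        exact_mod_cast one_add_mul_pow_sub_le habar0 habar1 hK1 (2 * m)

/-- Matrix-product expansion bound (equation (24) in the proof of Theorem 4): with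
`P = (I − αₘ Lₘ) ⋯ (I − α₁ L₁)`, `0 ≤ αᵢ ≤ ᾱ ≤ 1`, `Lᵢ` symmetric and
`K = max {1, maxᵢ ‖Lᵢ‖}`, one has
`‖PᵀP − I + 2 ∑ᵢ αᵢ Lᵢ‖ ≤ ᾱ² (2^{2m} − 2m − 1) K^{2m}`. -/
theorem product_expansion_bound {N m : ℕ} (hN : 1 ≤ N) (hm : 1 ≤ m)
    (L : Fin m → Matrix (Fin N) (Fin N) ℝ) (hLsymm : ∀ i, (L i).IsSymm)
    (abar : ℝ) (habar0 : 0 ≤ abar) (habar1 : abar ≤ 1)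
    (α : Fin m → ℝ) (hα0 : ∀ i, 0 ≤ α i) (hα1 : ∀ i, α i ≤ abar)
    (K : ℝ) (hK : K = max 1 (⨆ i : Fin m, specNorm (L i))) :
    specNorm
        ((List.ofFn fun i : Fin m =>
            (1 : Matrix (Fin N) (Fin N) ℝ) - α i • L i).reverse.prodᵀ
          * (List.ofFn fun i : Fin m =>
            (1 : Matrix (Fin N) (Fin N) ℝ) - α i • L i).reverse.prod
          - 1 + (2 : ℝ) • ∑ i, α i • L i)
      ≤ abar ^ 2 * ((2 : ℝ) ^ (2 * m) - 2 * m - 1) * K ^ (2 * m) :=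
  product_expansion_bound_general L hLsymm abar habar0 habar1 α hα0 hα1 K hK
end
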